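/- arXiv:2310.11432 — 4 statements merged into one kernel-verified Lean document; each statement's English description precedes it below -/
import Mathlib

section
/- Let R be a commutative ring in which 2 and 3 are invertible, and let p₁, q, h₁, h₂, h₃ ∈ R. For the Tate tuning a₁ = p₁, a₂ = q²h₁², a₃ = 0, a₄ = h₁⁴h₂⁴h₃⁴, a₆ = 0, the associated Weierstrass polynomials satisfy f = (1/48)(48h₁⁴h₂⁴h₃⁴ − p₁⁴ − 8h₁²p₁²q² − 16h₁⁴q⁴) and g = (1/864)(p₁² + 4h₁²q²)(72h₁⁴h₂⁴h₃⁴ − p₁⁴ − 8h₁²p₁²q² − 16h₁⁴q⁴), and the discriminant satisfies Δ = 4f³ + 27g² = (1/16)h₁⁸h₂⁸h₃⁸(8h₁²h₂²h₃² − p₁² − 4h₁²q²)(8h₁²h₂²h₃² + p₁² + 4h₁²q²). -/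
namespace FrozenFTheory

variable {R : Type*} [CommRing R]

/-- `48 = 2^4 * 3` is invertible when `2` and `3` are. -/
instance inv48 [Invertible (2 : R)] [Invertible (3 : R)] : Invertible (48 : R) :=
  (invertibleMul ((2 : R) ^ 4) (3 : R)).copy 48 (by norm_num)

/-- `864 = 2^5 * 3^3` is invertible when `2` and `3` are. -/
instance inv864 [Invertible (2 : R)] [Invertible (3 : R)] : Invertible (864 : R) :=
  (invertibleMul ((2 : R) ^ 5) ((3 : R) ^ 3)).copy 864 (by norm_num)

/-- `16 = 2^4` is invertible when `2` is. -/
instance inv16 [Invertible (2 : R)] : Invertible (16 : R) :=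
  (invertiblePow (2 : R) 4).copy 16 (by norm_num)

/-- `27 = 3^3` is invertible when `3` is. -/
instance inv27 [Invertible (3 : R)] : Invertible (27 : R) :=
  (invertiblePow (3 : R) 3).copy 27 (by norm_num)

variable [Invertible (2 : R)] [Invertible (3 : R)]

/-- The Weierstrass polynomial `f` associated to the Tate coefficients. -/
def tateF (a₁ a₂ a₃ a₄ : R) : R :=
  ⅟(48 : R) * (-(a₁ ^ 2 + 4 * a₂) ^ 2 + 24 * a₁ * a₃ + 48 * a₄)

/-- The Weierstrass polynomial `g` associated to the Tate coefficients. -/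
def tateG (a₁ a₂ a₃ a₄ a₆ : R) : R :=
  ⅟(864 : R) * (-(a₁ ^ 2 + 4 * a₂) ^ 3 + 36 * (a₁ * a₃ + 2 * a₄) * (a₁ ^ 2 + 4 * a₂) -
    216 * (a₃ ^ 2 + 4 * a₆))

/-- The discriminant `Δ = 4 f³ + 27 g²` associated to the Tate coefficients. -/
def tateΔ (a₁ a₂ a₃ a₄ a₆ : R) : R :=
  4 * tateF a₁ a₂ a₃ a₄ ^ 3 + 27 * tateG a₁ a₂ a₃ a₄ a₆ ^ 2

instance inv27648 [Invertible (2 : R)] [Invertible (3 : R)] : Invertible (27648 : R) :=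
  (invertibleMul ((2 : R) ^ 10) ((3 : R) ^ 3)).copy 27648 (by norm_num)

lemma aux_delta (x y z : R) (h : x ^ 3 + y ^ 2 = 1728 * z) :
    4 * (⅟(48 : R) * x) ^ 3 + 27 * (⅟(864 : R) * y) ^ 2 = ⅟(16 : R) * z := by
  have e1 : (4 : R) * ⅟(48 : R) ^ 3 = ⅟(27648 : R) := by
    symm
    refine invOf_eq_right_inv ?_
    have h48 : (27648 : R) * (4 * ⅟(48 : R) ^ 3) = (48 * ⅟(48 : R)) ^ 3 := by
      rw [mul_pow]; ring
    rw [h48, mul_invOf_self, one_pow]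
  have e2 : (27 : R) * ⅟(864 : R) ^ 2 = ⅟(27648 : R) := by
    symm
    refine invOf_eq_right_inv ?_
    have h864 : (27648 : R) * (27 * ⅟(864 : R) ^ 2) = (864 * ⅟(864 : R)) ^ 2 := by
      rw [mul_pow]; ring
    rw [h864, mul_invOf_self, one_pow]
  have e3 : ⅟(16 : R) = 1728 * ⅟(27648 : R) := by
    refine invOf_eq_right_inv ?_
    have h16 : (16 : R) * (1728 * ⅟(27648 : R)) = 27648 * ⅟(27648 : R) := by ring
    rw [h16, mul_invOf_self]
  linear_combination x ^ 3 * e1 + y ^ 2 * e2 - z * e3 + ⅟(27648 : R) * h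

/-- The tuning `a₁ = p₁, a₂ = q²h₁², a₃ = 0, a₄ = h₁⁴h₂⁴h₃⁴, a₆ = 0` on ℙ², reproducing the
massless spectrum of the ℙ¹×ℙ¹ model with one frozen 7-brane. -/
theorem oneFrozen_model (p₁ q h₁ h₂ h₃ : R) :
    tateF p₁ (q ^ 2 * h₁ ^ 2) 0 (h₁ ^ 4 * h₂ ^ 4 * h₃ ^ 4) =
      ⅟(48 : R) * (48 * h₁ ^ 4 * h₂ ^ 4 * h₃ ^ 4 - p₁ ^ 4 - 8 * h₁ ^ 2 * p₁ ^ 2 * q ^ 2 -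
        16 * h₁ ^ 4 * q ^ 4) ∧
    tateG p₁ (q ^ 2 * h₁ ^ 2) 0 (h₁ ^ 4 * h₂ ^ 4 * h₃ ^ 4) 0 =
      ⅟(864 : R) * ((p₁ ^ 2 + 4 * h₁ ^ 2 * q ^ 2) *
        (72 * h₁ ^ 4 * h₂ ^ 4 * h₃ ^ 4 - p₁ ^ 4 - 8 * h₁ ^ 2 * p₁ ^ 2 * q ^ 2 -
          16 * h₁ ^ 4 * q ^ 4)) ∧
    tateΔ p₁ (q ^ 2 * h₁ ^ 2) 0 (h₁ ^ 4 * h₂ ^ 4 * h₃ ^ 4) 0 =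
      ⅟(16 : R) * (h₁ ^ 8 * h₂ ^ 8 * h₃ ^ 8 *
        (8 * h₁ ^ 2 * h₂ ^ 2 * h₃ ^ 2 - p₁ ^ 2 - 4 * h₁ ^ 2 * q ^ 2) *
        (8 * h₁ ^ 2 * h₂ ^ 2 * h₃ ^ 2 + p₁ ^ 2 + 4 * h₁ ^ 2 * q ^ 2)) := by
  have hf : tateF p₁ (q ^ 2 * h₁ ^ 2) 0 (h₁ ^ 4 * h₂ ^ 4 * h₃ ^ 4) =
      ⅟(48 : R) * (48 * h₁ ^ 4 * h₂ ^ 4 * h₃ ^ 4 - p₁ ^ 4 - 8 * h₁ ^ 2 * p₁ ^ 2 * q ^ 2 -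
        16 * h₁ ^ 4 * q ^ 4) := by
    unfold tateF; ring
  have hg : tateG p₁ (q ^ 2 * h₁ ^ 2) 0 (h₁ ^ 4 * h₂ ^ 4 * h₃ ^ 4) 0 =
      ⅟(864 : R) * ((p₁ ^ 2 + 4 * h₁ ^ 2 * q ^ 2) *
        (72 * h₁ ^ 4 * h₂ ^ 4 * h₃ ^ 4 - p₁ ^ 4 - 8 * h₁ ^ 2 * p₁ ^ 2 * q ^ 2 -
          16 * h₁ ^ 4 * q ^ 4)) := by
    unfold tateG; ring
  refine ⟨hf, hg, ?_⟩
  rw [tateΔ, hf, hg]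
  exact aux_delta _ _ _ (by ring)

end FrozenFTheory
end

section
/- Let R be a commutative ring in which 2 and 3 are invertible, and let e, p₂, p₄ ∈ R. For the Tate tuning a₁ = 0, a₂ = e·p₂, a₃ = 0, a₄ = e⁸p₄, a₆ = 0 (the specialization a₂ ↦ e·p₂ of the unfrozen Aspinwall–Gross tuning), the associated Weierstrass polynomials satisfy f = (1/3)e²(−p₂² + 3e⁶p₄) and g = (1/27)e³p₂(−2p₂² + 9e⁶p₄), and the discriminant satisfies Δ = 4f³ + 27g² = e¹⁸p₄²(−p₂² + 4e⁶p₄). In particular e² divides f, e³ divides g, and e¹⁸ divides Δ. -/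
namespace FrozenFTheory

variable {R : Type*} [CommRing R]

variable [Invertible (2 : R)] [Invertible (3 : R)]

/-- The specialization `a₂ ↦ e·p₂` of the unfrozen Aspinwall–Gross tuning:
`a₁ = 0, a₂ = e·p₂, a₃ = 0, a₄ = e⁸p₄, a₆ = 0`; in particular `e² ∣ f`, `e³ ∣ g`, `e¹⁸ ∣ Δ`. -/
theorem aspinwallGross_unfrozen_enhanced (e p₂ p₄ : R) :
    tateF 0 (e * p₂) 0 (e ^ 8 * p₄) =
      ⅟(3 : R) * (e ^ 2 * (-p₂ ^ 2 + 3 * e ^ 6 * p₄)) ∧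
    tateG 0 (e * p₂) 0 (e ^ 8 * p₄) 0 =
      ⅟(27 : R) * (e ^ 3 * p₂ * (-(2 * p₂ ^ 2) + 9 * e ^ 6 * p₄)) ∧
    tateΔ 0 (e * p₂) 0 (e ^ 8 * p₄) 0 =
      e ^ 18 * p₄ ^ 2 * (-p₂ ^ 2 + 4 * e ^ 6 * p₄) ∧
    e ^ 2 ∣ tateF 0 (e * p₂) 0 (e ^ 8 * p₄) ∧
    e ^ 3 ∣ tateG 0 (e * p₂) 0 (e ^ 8 * p₄) 0 ∧
    e ^ 18 ∣ tateΔ 0 (e * p₂) 0 (e ^ 8 * p₄) 0 := by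
  have h3 : (3 : R) * ⅟(3 : R) = 1 := mul_invOf_self 3
  have h27 : (27 : R) * ⅟(27 : R) = 1 := mul_invOf_self 27
  have h48 : (48 : R) * ⅟(48 : R) = 1 := mul_invOf_self 48
  have h864 : (864 : R) * ⅟(864 : R) = 1 := mul_invOf_self 864
  have hu3 : (⅟(3 : R)) ^ 3 = ⅟(27 : R) := by
    have h : (27 : R) * (⅟(3 : R)) ^ 3 = 1 := by
      rw [show (27 : R) * (⅟(3 : R)) ^ 3 = (3 * ⅟(3 : R)) ^ 3 by ring, h3, one_pow]
    exact (invOf_eq_right_inv h).symm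
  set A : R := e ^ 2 * (-p₂ ^ 2 + 3 * e ^ 6 * p₄) with hA
  set B : R := e ^ 3 * p₂ * (-(2 * p₂ ^ 2) + 9 * e ^ 6 * p₄) with hB
  have hf : tateF 0 (e * p₂) 0 (e ^ 8 * p₄) = ⅟(3 : R) * A := by
    rw [tateF, hA]
    linear_combination (⅟(3 : R) * A) * h48 - (16 * ⅟(48 : R) * A) * h3
  have hg : tateG 0 (e * p₂) 0 (e ^ 8 * p₄) 0 = ⅟(27 : R) * B := by
    rw [tateG, hB]
    linear_combination (⅟(27 : R) * B) * h864 - (32 * ⅟(864 : R) * B) * h27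
  have hΔ : tateΔ 0 (e * p₂) 0 (e ^ 8 * p₄) 0 =
      e ^ 18 * p₄ ^ 2 * (-p₂ ^ 2 + 4 * e ^ 6 * p₄) := by
    rw [tateΔ, hf, hg]
    linear_combination (4 * A ^ 3) * hu3 +
      (B ^ 2 * ⅟(27 : R) + e ^ 18 * p₄ ^ 2 * (-p₂ ^ 2 + 4 * e ^ 6 * p₄)) * h27
  refine ⟨hf, hg, hΔ, ?_, ?_, ?_⟩
  · exact ⟨⅟(3 : R) * (-p₂ ^ 2 + 3 * e ^ 6 * p₄), by rw [hf, hA]; ring⟩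
  · exact ⟨⅟(27 : R) * (p₂ * (-(2 * p₂ ^ 2) + 9 * e ^ 6 * p₄)), by rw [hg, hB]; ring⟩
  · exact ⟨p₄ ^ 2 * (-p₂ ^ 2 + 4 * e ^ 6 * p₄), by rw [hΔ]; ring⟩

end FrozenFTheory
end

section
/- Let R be a commutative ring in which 2 and 3 are invertible, and let e, p₂, F ∈ R. For the Tate tuning a₁ = 0, a₂ = e²·p₂, a₃ = 0, a₄ = e⁸F²⁴, a₆ = 0 (the specialization a₂ ↦ e²·p₂ of the frozen Aspinwall–Gross tuning), the associated Weierstrass polynomials satisfy f = (1/3)e⁴(−p₂² + 3e⁴F²⁴) and g = (1/27)e⁶p₂(−2p₂² + 9e⁴F²⁴), and the discriminant satisfies Δ = 4f³ + 27g² = e²⁰F⁴⁸(−p₂ + 2e²F¹²)(p₂ + 2e²F¹²). In particular e⁴ divides f, e⁶ divides g, and e²⁰ divides Δ, so e supports a (4,6)-divisor. -/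
namespace FrozenFTheory

variable {R : Type*} [CommRing R]

variable [Invertible (2 : R)] [Invertible (3 : R)]

/-- The specialization `a₂ ↦ e²·p₂` of the frozen Aspinwall–Gross tuning:
`a₁ = 0, a₂ = e²·p₂, a₃ = 0, a₄ = e⁸F²⁴, a₆ = 0`; in particular `e⁴ ∣ f`, `e⁶ ∣ g`, `e²⁰ ∣ Δ`,
so `e` supports a `(4,6)`-divisor. -/
theorem aspinwallGross_frozen_enhanced (e p₂ F : R) :
    tateF 0 (e ^ 2 * p₂) 0 (e ^ 8 * F ^ 24) =
      ⅟(3 : R) * (e ^ 4 * (-p₂ ^ 2 + 3 * e ^ 4 * F ^ 24)) ∧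
    tateG 0 (e ^ 2 * p₂) 0 (e ^ 8 * F ^ 24) 0 =
      ⅟(27 : R) * (e ^ 6 * p₂ * (-(2 * p₂ ^ 2) + 9 * e ^ 4 * F ^ 24)) ∧
    tateΔ 0 (e ^ 2 * p₂) 0 (e ^ 8 * F ^ 24) 0 =
      e ^ 20 * F ^ 48 * (-p₂ + 2 * e ^ 2 * F ^ 12) * (p₂ + 2 * e ^ 2 * F ^ 12) ∧
    e ^ 4 ∣ tateF 0 (e ^ 2 * p₂) 0 (e ^ 8 * F ^ 24) ∧
    e ^ 6 ∣ tateG 0 (e ^ 2 * p₂) 0 (e ^ 8 * F ^ 24) 0 ∧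
    e ^ 20 ∣ tateΔ 0 (e ^ 2 * p₂) 0 (e ^ 8 * F ^ 24) 0 := by

  have h3 : (3 : R) * ⅟(3 : R) = 1 := mul_invOf_self _
  have h27 : (27 : R) * ⅟(27 : R) = 1 := mul_invOf_self _
  have h48 : (48 : R) * ⅟(48 : R) = 1 := mul_invOf_self _
  have h864 : (864 : R) * ⅟(864 : R) = 1 := mul_invOf_self _
  set X : R := e ^ 4 * (-p₂ ^ 2 + 3 * e ^ 4 * F ^ 24) with hX
  set Y : R := e ^ 6 * p₂ * (-(2 * p₂ ^ 2) + 9 * e ^ 4 * F ^ 24) with hY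
  have hf : tateF 0 (e ^ 2 * p₂) 0 (e ^ 8 * F ^ 24) = ⅟(3 : R) * X := by
    rw [tateF]
    linear_combination (⅟(3 : R) * X) * h48 - 16 * (⅟(48 : R) * X) * h3
  have hg : tateG 0 (e ^ 2 * p₂) 0 (e ^ 8 * F ^ 24) 0 = ⅟(27 : R) * Y := by
    rw [tateG]
    linear_combination (⅟(27 : R) * Y) * h864 - 32 * (⅟(864 : R) * Y) * h27
  have hd : tateΔ 0 (e ^ 2 * p₂) 0 (e ^ 8 * F ^ 24) 0 =
      e ^ 20 * F ^ 48 * (-p₂ + 2 * e ^ 2 * F ^ 12) * (p₂ + 2 * e ^ 2 * F ^ 12) := by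
    rw [tateΔ, hf, hg]
    linear_combination (4 * X ^ 3 * ⅟(27 : R) * (9 * ⅟(3 : R) ^ 2 + 3 * ⅟(3 : R) + 1)) * h3 +
      (Y ^ 2 * ⅟(27 : R) +
        e ^ 20 * F ^ 48 * (-p₂ + 2 * e ^ 2 * F ^ 12) * (p₂ + 2 * e ^ 2 * F ^ 12) -
        4 * X ^ 3 * ⅟(3 : R) ^ 3) * h27
  refine ⟨hf, hg, hd, ⟨⅟(3 : R) * (-p₂ ^ 2 + 3 * e ^ 4 * F ^ 24), by rw [hf, hX]; ring⟩,
    ⟨⅟(27 : R) * (p₂ * (-(2 * p₂ ^ 2) + 9 * e ^ 4 * F ^ 24)), by rw [hg, hY]; ring⟩,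
    ⟨F ^ 48 * (-p₂ + 2 * e ^ 2 * F ^ 12) * (p₂ + 2 * e ^ 2 * F ^ 12), by rw [hd]; ring⟩⟩

end FrozenFTheory
end

section
/- Let R be a commutative ring in which 2 and 3 are invertible, and let h₁, h₂, h₃, p₂ ∈ R. For the Tate tuning a₁ = h₁h₂h₃, a₂ = h₁h₂h₃·p₂, a₃ = 0, a₄ = h₁⁴h₂⁴h₃⁴, a₆ = 0, the associated Weierstrass polynomials satisfy f = (1/48)h₁²h₂²h₃²(47h₁²h₂²h₃² − 8h₁h₂h₃·p₂ − 16p₂²) and g = (1/864)h₁³h₂³h₃³(h₁h₂h₃ + 4p₂)(71h₁²h₂²h₃² − 8h₁h₂h₃·p₂ − 16p₂²), and the discriminant satisfies Δ = 4f³ + 27g² = (1/16)h₁¹⁰h₂¹⁰h₃¹⁰(7h₁h₂h₃ − 4p₂)(9h₁h₂h₃ + 4p₂). -/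
namespace FrozenFTheory

variable {R : Type*} [CommRing R]

variable [Invertible (2 : R)] [Invertible (3 : R)]

/-- The tuning `a₁ = h₁h₂h₃, a₂ = h₁h₂h₃·p₂, a₃ = 0, a₄ = h₁⁴h₂⁴h₃⁴, a₆ = 0` on ℙ², realizing the
compact embedding of the triple so–sp frozen configuration. -/
theorem triple_so_sp_model (h₁ h₂ h₃ p₂ : R) :
    tateF (h₁ * h₂ * h₃) (h₁ * h₂ * h₃ * p₂) 0 (h₁ ^ 4 * h₂ ^ 4 * h₃ ^ 4) =
      ⅟(48 : R) * (h₁ ^ 2 * h₂ ^ 2 * h₃ ^ 2 *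
        (47 * h₁ ^ 2 * h₂ ^ 2 * h₃ ^ 2 - 8 * h₁ * h₂ * h₃ * p₂ - 16 * p₂ ^ 2)) ∧
    tateG (h₁ * h₂ * h₃) (h₁ * h₂ * h₃ * p₂) 0 (h₁ ^ 4 * h₂ ^ 4 * h₃ ^ 4) 0 =
      ⅟(864 : R) * (h₁ ^ 3 * h₂ ^ 3 * h₃ ^ 3 * (h₁ * h₂ * h₃ + 4 * p₂) *
        (71 * h₁ ^ 2 * h₂ ^ 2 * h₃ ^ 2 - 8 * h₁ * h₂ * h₃ * p₂ - 16 * p₂ ^ 2)) ∧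
    tateΔ (h₁ * h₂ * h₃) (h₁ * h₂ * h₃ * p₂) 0 (h₁ ^ 4 * h₂ ^ 4 * h₃ ^ 4) 0 =
      ⅟(16 : R) * (h₁ ^ 10 * h₂ ^ 10 * h₃ ^ 10 *
        (7 * h₁ * h₂ * h₃ - 4 * p₂) * (9 * h₁ * h₂ * h₃ + 4 * p₂)) := by
  have i27648 : Invertible (27648 : R) :=
    (invertibleMul ((2 : R) ^ 10) ((3 : R) ^ 3)).copy 27648 (by norm_num)
  have hf : (4 : R) * (⅟(48 : R)) ^ 3 = ⅟(27648 : R) :=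
    (invOf_eq_right_inv (by
      calc (27648 : R) * (4 * (⅟(48 : R)) ^ 3) = (48 * ⅟(48 : R)) ^ 3 := by ring
        _ = 1 := by rw [mul_invOf_self]; ring)).symm
  have hg : (27 : R) * (⅟(864 : R)) ^ 2 = ⅟(27648 : R) :=
    (invOf_eq_right_inv (by
      calc (27648 : R) * (27 * (⅟(864 : R)) ^ 2) = (864 * ⅟(864 : R)) ^ 2 := by ring
        _ = 1 := by rw [mul_invOf_self]; ring)).symm
  have h16 : (⅟(16 : R)) = 1728 * ⅟(27648 : R) :=
    invOf_eq_right_inv (by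
      calc (16 : R) * (1728 * ⅟(27648 : R)) = 27648 * ⅟(27648 : R) := by ring
        _ = 1 := mul_invOf_self _)
  refine ⟨by unfold tateF; ring, by unfold tateG; ring, ?_⟩
  unfold tateΔ tateF tateG
  rw [h16]
  linear_combination (-(h₁ * h₂ * h₃) ^ 2 * ((h₁ * h₂ * h₃) + 4 * p₂) ^ 2 +
      48 * h₁ ^ 4 * h₂ ^ 4 * h₃ ^ 4) ^ 3 * hf +
    (-((h₁ * h₂ * h₃) ^ 2 + 4 * (h₁ * h₂ * h₃ * p₂)) ^ 3 +
      36 * (2 * (h₁ ^ 4 * h₂ ^ 4 * h₃ ^ 4)) * ((h₁ * h₂ * h₃) ^ 2 + 4 * (h₁ * h₂ * h₃ * p₂))) ^ 2 * hg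

end FrozenFTheory
end
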